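/- Let k ≥ 2 and let v be an integer with 0 ≤ v ≤ k-1. Suppose nonnegative integers s_1, ..., s_n each satisfy 0 ≤ s_γ ≤ k(k-1). If the s_γ are of the form s_γ = (α_γ - 1)·k + (k - β_γ) for integers 1 ≤ α_γ ≤ k-1, 0 ≤ β_γ ≤ k-1 (or s_γ = 0), and q_n, ..., q_1 are defined by the carry recursion q_{n+1} = v and q_γ = α_γ if β_γ ≤ q_{γ+1}, q_γ = α_γ - 1 if β_γ > q_{γ+1} (and q_γ = 0 when s_γ = 0), then v + Σ_{γ=1}^n s_γ·k^{n-γ} ≥ u·k^n if and only if q_1 ≥ u. -/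

import Mathlib

/-!
Reading the columns from the least significant one upwards, the recursion for `q` is exactly
the schoolbook carry: `q γ = (s γ + q (γ + 1)) / k`, because every carry is at most `k - 1`.
Composing these floor divisions gives `q γ = (v + ∑_{δ ≥ γ} s δ k^(n-δ)) / k^(n+1-γ)`, so `q 1`
is the quotient of the whole sum by `k ^ n`, and `u ≤ X / k ^ n ↔ u * k ^ n ≤ X`.
-/

open Finset

theorem carry_eq_div_of_one_le {k α β c : ℕ} (hα : 1 ≤ α) (hc : c < k) :
    (if β ≤ c then α else α - 1) = ((α - 1) * k + (k - β) + c) / k := by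
  have hk : 0 < k := by omega
  obtain ⟨a, rfl⟩ : ∃ a, α = a + 1 := ⟨α - 1, by omega⟩
  rw [Nat.add_sub_cancel]
  split_ifs with hβ
  · have hsum : a * k + (k - β) + c = (c - β) + k * (a + 1) := by
      rw [Nat.mul_succ, Nat.mul_comm]; omega
    rw [hsum, Nat.add_mul_div_left _ _ hk, Nat.div_eq_of_lt (by omega), Nat.zero_add]
  · rw [Nat.add_assoc, Nat.mul_comm, Nat.mul_add_div hk, Nat.div_eq_of_lt (by omega),
      Nat.add_zero]

theorem carry_eq_div {k s α β c : ℕ} (hc : c < k)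
    (hs : s = 0 ∨ (1 ≤ α ∧ s = (α - 1) * k + (k - β))) :
    (if s = 0 then 0 else if β ≤ c then α else α - 1) = (s + c) / k := by
  by_cases h0 : s = 0
  · simp [h0, Nat.div_eq_of_lt hc]
  · obtain ⟨hα, rfl⟩ := hs.resolve_left h0
    rw [if_neg h0, carry_eq_div_of_one_le hα hc]

theorem carry_eq_sum_div_pow {k n v : ℕ} {s q : ℕ → ℕ} (hk : 0 < k) (htop : q (n + 1) = v)
    (hrec : ∀ γ, 1 ≤ γ → γ ≤ n → q γ = (s γ + q (γ + 1)) / k) :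
    q 1 = (v + ∑ γ ∈ Icc 1 n, s γ * k ^ (n - γ)) / k ^ n := by
  suffices h : ∀ γ, 1 ≤ γ → γ ≤ n + 1 →
      q γ = (v + ∑ δ ∈ Icc γ n, s δ * k ^ (n - δ)) / k ^ (n + 1 - γ) by
    simpa using h 1 le_rfl (by omega)
  intro γ h1 hγ
  induction hγ using Nat.decreasingInduction with
  | self => simp [htop]
  | of_succ γ hγn ih =>
    have hsplit : ∑ δ ∈ Icc γ n, s δ * k ^ (n - δ)
        = s γ * k ^ (n - γ) + ∑ δ ∈ Icc (γ + 1) n, s δ * k ^ (n - δ) := by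
      rw [Icc_eq_cons_Ioc (by omega), sum_cons, Icc_add_one_left_eq_Ioc]
    have hpow : k ^ (n + 1 - γ) = k ^ (n - γ) * k := by
      rw [← pow_succ]; congr 1; omega
    rw [hrec γ h1 (by omega), ih (by omega), show n + 1 - (γ + 1) = n - γ by omega, hsplit, hpow,
      ← Nat.div_div_eq_div_mul, ← add_assoc, add_right_comm,
      Nat.add_mul_div_right _ _ (pow_pos hk _), add_comm]

/-- Base-`k` digit/carry argument: column values `s_γ` (for `γ = 1,...,n`), each either `0`
or of the form `(α_γ - 1)·k + (k - β_γ)` with `1 ≤ α_γ ≤ k-1` and `0 ≤ β_γ ≤ k-1`, with `v`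
extra units in the least significant column, sum to at least `u·k^n` iff the carry `q_1`
produced by the carry recursion is at least `u`. -/
theorem base_k_carry (k n u v : ℕ) (hk : 2 ≤ k) (hv : v ≤ k - 1)
    (s α β : ℕ → ℕ)
    (hs : ∀ γ, 1 ≤ γ → γ ≤ n →
      s γ = 0 ∨ (1 ≤ α γ ∧ α γ ≤ k - 1 ∧ β γ ≤ k - 1 ∧
        s γ = (α γ - 1) * k + (k - β γ)))
    (q : ℕ → ℕ) (hqtop : q (n + 1) = v)
    (hq : ∀ γ, 1 ≤ γ → γ ≤ n →
      q γ = if s γ = 0 then 0 else if β γ ≤ q (γ + 1) then α γ else α γ - 1) :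
    (u * k ^ n ≤ v + ∑ γ ∈ Finset.Icc 1 n, s γ * k ^ (n - γ)) ↔ u ≤ q 1 := by
  have hq_lt : ∀ γ, 1 ≤ γ → γ ≤ n + 1 → q γ < k := by
    intro γ h1 hγ
    rcases Nat.lt_or_ge γ (n + 1) with hγn | hγn
    · rw [hq γ h1 (by omega)]
      rcases hs γ h1 (by omega) with h0 | ⟨_, hα, -⟩ <;> split_ifs <;> omega
    · rw [show γ = n + 1 by omega, hqtop]; omega
  have hrec : ∀ γ, 1 ≤ γ → γ ≤ n → q γ = (s γ + q (γ + 1)) / k := fun γ h1 hγ => by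
    rw [hq γ h1 hγ]
    exact carry_eq_div (hq_lt _ (by omega) (by omega))
      ((hs γ h1 hγ).imp_right fun h => ⟨h.1, h.2.2.2⟩)
  rw [carry_eq_sum_div_pow (by omega) hqtop hrec, Nat.le_div_iff_mul_le (pow_pos (by omega) n)]
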